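/- For every integer d ≥ 3, λ(F_1^d) = 1/2, where F_1^d = {x ∈ V_d : |x| = 0 or |x| = 1}. -/

import Mathlib

open Finset Filter Topology

/-- The weight of a vertex of the hypercube `{0,1}^n`: number of coordinates equal to 1. -/
def cubeWeight {n : ℕ} (x : Fin n → Bool) : ℕ :=
  (Finset.univ.filter fun i => x i = true).card

/-- The support of a vertex of the hypercube: the set of coordinates equal to 1. -/
def cubeSupp {n : ℕ} (x : Fin n → Bool) : Finset (Fin n) :=
  Finset.univ.filter fun i => x i = true

/-- An embedding of the `d`-dimensional hypercube `Q_d` into `Q_n`: an injective map on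
vertices that preserves the edges (pairs at Hamming distance 1). -/
def IsCubeEmbedding {d n : ℕ} (i : (Fin d → Bool) → (Fin n → Bool)) : Prop :=
  Function.Injective i ∧
    ∀ x y : Fin d → Bool, hammingDist x y = 1 → hammingDist (i x) (i y) = 1

/-- `S ⊆ V_n` is `F`-free (for `F ⊆ V_d`) if no embedding `i : Q_d → Q_n` has `i(F) ⊆ S`. -/
def IsFree {d n : ℕ} (F : Set (Fin d → Bool)) (S : Set (Fin n → Bool)) : Prop :=
  ∀ i : (Fin d → Bool) → (Fin n → Bool), IsCubeEmbedding i → ¬ (i '' F ⊆ S)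

/-- `exc n F`: the maximum size of an `F`-free subset of `V_n = {0,1}^n`. -/
noncomputable def exc {d : ℕ} (n : ℕ) (F : Set (Fin d → Bool)) : ℕ :=
  sSup {k : ℕ | ∃ S : Finset (Fin n → Bool), IsFree F (S : Set (Fin n → Bool)) ∧ S.card = k}

/-- F₁^d = {x ∈ V_d : |x| = 0 or |x| = 1}. -/
def F1d (d : ℕ) : Set (Fin d → Bool) :=
  {x | cubeWeight x = 0 ∨ cubeWeight x = 1}

/-- F₂^d = {x ∈ V_d : |x| = 0, or |x| = 2 with supp(x) = {i,j} and i ≢ j (mod 2)}. -/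
def F2d (d : ℕ) : Set (Fin d → Bool) :=
  {x | cubeWeight x = 0 ∨
    (cubeWeight x = 2 ∧ ∃ i j : Fin d, (i : ℕ) % 2 ≠ (j : ℕ) % 2 ∧ cubeSupp x = {i, j})}

/-- F_d^d = {x ∈ V_d : |x| = 0 or |x| = d}, a pair of antipodal vertices. -/
def Fdd (d : ℕ) : Set (Fin d → Bool) :=
  {x | cubeWeight x = 0 ∨ cubeWeight x = d}

/-!
The even-weight vertices and the odd-weight vertices of `Q_n` each span no edge, so both are
`F₁^d`-free (`F₁^d` contains an edge), and one of them has at least `2^(n-1)` elements.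
Conversely, `F₁^d` is a vertex together with `d` of its neighbours, and any `d` directions at a
vertex `v` span a subcube through `v`; so in an `F₁^d`-free set `S` every vertex has at most
`d - 1` neighbours in `S`. Counting the edges between `S` and its complement gives
`|S| (n - d + 1) ≤ (2^n - |S|) n`, that is `|S| / 2^n ≤ n / (2n - d + 1) → 1/2`.
-/

open scoped symmDiff

variable {d n : ℕ}

def flipCoords (v : Fin n → Bool) (s : Finset (Fin n)) : Fin n → Bool :=
  fun j => xor (v j) (decide (j ∈ s))

@[simp]
lemma flipCoords_empty (v : Fin n → Bool) : flipCoords v ∅ = v := by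
  funext j; simp [flipCoords]

@[simp]
lemma flipCoords_flipCoords (v : Fin n → Bool) (s : Finset (Fin n)) :
    flipCoords (flipCoords v s) s = v := by
  funext j; simp [flipCoords]

lemma hammingDist_flipCoords (v : Fin n → Bool) (s t : Finset (Fin n)) :
    hammingDist (flipCoords v s) (flipCoords v t) = #(s ∆ t) := by
  unfold hammingDist
  congr 1
  ext j
  simp only [flipCoords, mem_filter, mem_univ, true_and, ne_eq, Bool.xor_right_inj,
    decide_eq_decide, mem_symmDiff]
  tauto

lemma hammingDist_flipCoords_singleton (v : Fin n → Bool) (j : Fin n) :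
    hammingDist v (flipCoords v {j}) = 1 := by
  have := hammingDist_flipCoords v ∅ {j}
  rwa [flipCoords_empty, ← bot_eq_empty, bot_symmDiff, card_singleton] at this

lemma flipCoords_false_cubeSupp (x : Fin n → Bool) :
    flipCoords (fun _ => false) (cubeSupp x) = x := by
  funext j; simp [flipCoords, cubeSupp]

lemma cubeSupp_flipCoords_false (s : Finset (Fin n)) :
    cubeSupp (flipCoords (fun _ => false) s) = s := by
  ext j; simp [flipCoords, cubeSupp]

lemma cubeWeight_eq_card_cubeSupp (x : Fin n → Bool) : cubeWeight x = #(cubeSupp x) := rfl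

lemma hammingDist_eq_card_symmDiff_cubeSupp (x y : Fin n → Bool) :
    hammingDist x y = #(cubeSupp x ∆ cubeSupp y) := by
  conv_lhs => rw [← flipCoords_false_cubeSupp x, ← flipCoords_false_cubeSupp y]
  exact hammingDist_flipCoords _ _ _

lemma Finset.card_add_card_eq_card_symmDiff_add {α : Type*} [DecidableEq α] (s t : Finset α) :
    #s + #t = #(s ∆ t) + 2 * #(s ∩ t) := by
  rw [symmDiff_eq_sup_sdiff_inf, ← card_union_add_card_inter,
    card_sdiff_of_subset (inf_le_sup : s ⊓ t ≤ s ⊔ t)]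
  have := card_le_card (inf_le_sup : s ⊓ t ≤ s ⊔ t)
  simp only [sup_eq_union, inf_eq_inter] at this ⊢
  omega

lemma even_cubeWeight_iff_not_of_hammingDist_eq_one {x y : Fin n → Bool}
    (h : hammingDist x y = 1) : Even (cubeWeight x) ↔ ¬ Even (cubeWeight y) := by
  have hsum := card_add_card_eq_card_symmDiff_add (cubeSupp x) (cubeSupp y)
  rw [← hammingDist_eq_card_symmDiff_cubeSupp, h] at hsum
  have hodd : ¬ Even (cubeWeight x + cubeWeight y) := by
    rw [Nat.not_even_iff_odd]
    exact ⟨#(cubeSupp x ∩ cubeSupp y), by rw [cubeWeight_eq_card_cubeSupp,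
      cubeWeight_eq_card_cubeSupp, hsum, add_comm]⟩
  rw [Nat.even_add] at hodd
  tauto

def subcubeEmbedding (a : Fin d ↪ Fin n) (v : Fin n → Bool) (x : Fin d → Bool) :
    Fin n → Bool :=
  flipCoords v ((cubeSupp x).map a)

lemma hammingDist_subcubeEmbedding (a : Fin d ↪ Fin n) (v : Fin n → Bool)
    (x y : Fin d → Bool) :
    hammingDist (subcubeEmbedding a v x) (subcubeEmbedding a v y) = hammingDist x y := by
  rw [subcubeEmbedding, subcubeEmbedding, hammingDist_flipCoords, map_eq_image, map_eq_image,
    ← image_symmDiff _ _ a.injective, card_image_of_injective _ a.injective,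
    hammingDist_eq_card_symmDiff_cubeSupp]

lemma isCubeEmbedding_subcubeEmbedding (a : Fin d ↪ Fin n) (v : Fin n → Bool) :
    IsCubeEmbedding (subcubeEmbedding a v) := by
  refine ⟨fun x y hxy => ?_, fun x y h => by rw [hammingDist_subcubeEmbedding, h]⟩
  rw [← hammingDist_eq_zero, ← hammingDist_subcubeEmbedding a v, hxy, hammingDist_self]

lemma subcubeEmbedding_image_F1d_subset (a : Fin d ↪ Fin n) (v : Fin n → Bool) :
    subcubeEmbedding a v '' F1d d ⊆ insert v (Set.range fun m => flipCoords v {a m}) := by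
  rintro _ ⟨x, hx | hx, rfl⟩
  · left
    rw [subcubeEmbedding, show cubeSupp x = ∅ from card_eq_zero.1 hx, map_empty,
      flipCoords_empty]
  · obtain ⟨m, hm⟩ := card_eq_one.1 hx
    right
    exact ⟨m, by rw [subcubeEmbedding, show cubeSupp x = {m} from hm, map_singleton]⟩

lemma IsFree.of_hammingDist_ne_one {F : Set (Fin d → Bool)} {S : Set (Fin n → Bool)}
    {x y : Fin d → Bool} (hx : x ∈ F) (hy : y ∈ F) (hxy : hammingDist x y = 1)
    (hS : ∀ u ∈ S, ∀ w ∈ S, hammingDist u w ≠ 1) : IsFree F S :=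
  fun _ hi hiF => hS _ (hiF ⟨x, hx, rfl⟩) _ (hiF ⟨y, hy, rfl⟩) (hi.2 x y hxy)

lemma zero_mem_F1d : (fun _ => false) ∈ F1d d := by
  left; simp [cubeWeight]

lemma flipCoords_zero_singleton_mem_F1d (m : Fin d) :
    flipCoords (fun _ => false) {m} ∈ F1d d := by
  right
  rw [cubeWeight_eq_card_cubeSupp, cubeSupp_flipCoords_false, card_singleton]

lemma isFree_F1d_of_hammingDist_ne_one (hd : 1 ≤ d) {S : Set (Fin n → Bool)}
    (hS : ∀ u ∈ S, ∀ w ∈ S, hammingDist u w ≠ 1) : IsFree (F1d d) S :=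
  .of_hammingDist_ne_one zero_mem_F1d (flipCoords_zero_singleton_mem_F1d ⟨0, hd⟩)
    (hammingDist_flipCoords_singleton _ _) hS

lemma card_flipCoords_mem_lt_of_isFree_F1d {S : Finset (Fin n → Bool)}
    (hS : IsFree (F1d d) (S : Set (Fin n → Bool)))
    {v : Fin n → Bool} (hv : v ∈ S) : #{j | flipCoords v {j} ∈ S} < d := by
  by_contra! hdeg
  obtain ⟨t, hts, htd⟩ := exists_subset_card_eq hdeg
  let a := (t.orderEmbOfFin htd).toEmbedding
  refine hS _ (isCubeEmbedding_subcubeEmbedding a v)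
    ((subcubeEmbedding_image_F1d_subset a v).trans ?_)
  rintro _ (rfl | ⟨m, rfl⟩)
  · exact hv
  · exact (mem_filter.1 (hts (t.orderEmbOfFin_mem htd m))).2

lemma card_mul_sub_le_card_compl_mul (S : Finset (Fin n → Bool)) {D : ℕ}
    (hS : ∀ v ∈ S, #{j | flipCoords v {j} ∈ S} ≤ D) : #S * (n - D) ≤ #Sᶜ * n := by
  set A := (S ×ˢ univ).filter fun p : (Fin n → Bool) × Fin n => flipCoords p.1 {p.2} ∉ S
  have hlow : #S * (n - D) ≤ #A := calc
    #S * (n - D) = ∑ _v ∈ S, (n - D) := by rw [sum_const, smul_eq_mul]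
    _ ≤ ∑ v ∈ S, #{j | flipCoords v {j} ∉ S} := sum_le_sum fun v hv => by
      have hsplit := card_filter_add_card_filter_not (s := (univ : Finset (Fin n)))
        (fun j => flipCoords v {j} ∈ S)
      rw [card_univ, Fintype.card_fin] at hsplit
      have := hS v hv
      omega
    _ = #A := by simp only [A, card_filter, sum_product]
  have hup : #A ≤ #(Sᶜ ×ˢ (univ : Finset (Fin n))) := by
    refine card_le_card_of_injOn (fun p => (flipCoords p.1 {p.2}, p.2)) ?_ ?_
    · intro p hp
      simp_all [A]
    · rintro ⟨v, j⟩ - ⟨w, k⟩ - h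
      simp only [Prod.mk.injEq] at h
      obtain ⟨hvw, rfl⟩ := h
      simpa using congrArg (flipCoords · {j}) hvw
  rw [card_product, card_univ, Fintype.card_fin] at hup
  exact hlow.trans hup

lemma bddAbove_card_isFree (F : Set (Fin d → Bool)) :
    BddAbove
      {k | ∃ S : Finset (Fin n → Bool), IsFree F (S : Set (Fin n → Bool)) ∧ #S = k} :=
  ⟨2 ^ n, by rintro _ ⟨S, -, rfl⟩; simpa using card_le_univ S⟩

lemma card_le_exc {F : Set (Fin d → Bool)} {S : Finset (Fin n → Bool)}
    (hS : IsFree F (S : Set (Fin n → Bool))) : #S ≤ exc n F :=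
  le_csSup (bddAbove_card_isFree F) ⟨S, hS, rfl⟩

lemma exists_isFree_card_eq_exc {F : Set (Fin d → Bool)} (hF : F.Nonempty) :
    ∃ S : Finset (Fin n → Bool), IsFree F (S : Set (Fin n → Bool)) ∧ #S = exc n F := by
  have hempty : IsFree F ((∅ : Finset (Fin n → Bool)) : Set (Fin n → Bool)) :=
    fun i _ hi => (hF.image i).ne_empty (by simpa using hi)
  refine Nat.sSup_mem ?_ (bddAbove_card_isFree F)
  exact ⟨0, ∅, hempty, card_empty⟩

lemma two_pow_le_two_mul_exc_F1d (hd : 1 ≤ d) : 2 ^ n ≤ 2 * exc n (F1d d) := by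
  let E : Finset (Fin n → Bool) := univ.filter fun v => Even (cubeWeight v)
  let O : Finset (Fin n → Bool) := univ.filter fun v => ¬ Even (cubeWeight v)
  have hE : #E ≤ exc n (F1d d) := card_le_exc <| isFree_F1d_of_hammingDist_ne_one hd
    fun u hu w hw huw => by
      simp only [E, coe_filter, mem_univ, true_and, Set.mem_ofPred_eq] at hu hw
      exact (even_cubeWeight_iff_not_of_hammingDist_eq_one huw).1 hu hw
  have hO : #O ≤ exc n (F1d d) := card_le_exc <| isFree_F1d_of_hammingDist_ne_one hd
    fun u hu w hw huw => by
      simp only [O, coe_filter, mem_univ, true_and, Set.mem_ofPred_eq] at hu hw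
      rw [hammingDist_comm] at huw
      exact hw ((even_cubeWeight_iff_not_of_hammingDist_eq_one huw).2 hu)
  have hEO : #E + #O = 2 ^ n := by
    rw [card_filter_add_card_filter_not, card_univ, Fintype.card_fun, Fintype.card_bool,
      Fintype.card_fin]
  omega

lemma exc_F1d_mul_le (hd : 1 ≤ d) (hdn : d ≤ n) :
    (exc n (F1d d) : ℝ) * (2 * n - d + 1) ≤ 2 ^ n * n := by
  obtain ⟨S, hS, hcard⟩ := exists_isFree_card_eq_exc (n := n) ⟨_, zero_mem_F1d (d := d)⟩
  have hcount := card_mul_sub_le_card_compl_mul S (D := d - 1) fun v hv =>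
    Nat.le_sub_one_of_lt (card_flipCoords_mem_lt_of_isFree_F1d hS hv)
  have hSle : #S ≤ 2 ^ n := by simpa using card_le_univ S
  rw [card_compl, Fintype.card_fun, Fintype.card_bool, Fintype.card_fin] at hcount
  have hreal : (#S : ℝ) * ((n - (d - 1) : ℕ) : ℝ) ≤ ((2 ^ n - #S : ℕ) : ℝ) * n := by
    exact_mod_cast hcount
  rw [Nat.cast_sub (by omega), Nat.cast_sub hd, Nat.cast_sub hSle] at hreal
  push_cast at hreal
  rw [← hcard]
  linarith

lemma tendsto_natCast_div_two_mul_sub (c : ℝ) :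
    Tendsto (fun n : ℕ => (n : ℝ) / (2 * n - c)) atTop (𝓝 (1 / 2)) := by
  have hlim : Tendsto (fun n : ℕ => 1 / (2 - c / n)) atTop (𝓝 (1 / (2 - 0))) :=
    tendsto_const_nhds.div (tendsto_const_nhds.sub (tendsto_const_div_atTop_nhds_zero_nat c))
      (by norm_num)
  rw [sub_zero] at hlim
  refine hlim.congr' ?_
  filter_upwards [eventually_ne_atTop 0] with n hn
  have hn' : (n : ℝ) ≠ 0 := Nat.cast_ne_zero.2 hn
  rw [show 2 - c / n = (2 * n - c) / n by field_simp, one_div_div]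

/-- For every d ≥ 3, λ(F₁^d) = 1/2. -/
theorem lambda_F1d (d : ℕ) (hd : 3 ≤ d) :
    Filter.Tendsto (fun n : ℕ => (exc n (F1d d) : ℝ) / 2 ^ n) Filter.atTop (𝓝 (1 / 2)) := by
  have hd1 : 1 ≤ d := by omega
  refine tendsto_of_tendsto_of_tendsto_of_le_of_le' tendsto_const_nhds
    (tendsto_natCast_div_two_mul_sub ((d : ℝ) - 1)) (Eventually.of_forall fun n => ?_) ?_
  · have hlow : (2 : ℝ) ^ n ≤ 2 * exc n (F1d d) := by
      exact_mod_cast two_pow_le_two_mul_exc_F1d (n := n) hd1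
    rw [le_div_iff₀ (by positivity)]
    linarith
  · filter_upwards [eventually_ge_atTop d] with n hn
    have hup := exc_F1d_mul_le hd1 hn
    have hdn : (d : ℝ) ≤ n := by exact_mod_cast hn
    rw [div_le_div_iff₀ (by positivity) (by linarith)]
    linarith
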